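/- (Assouad's embedding theorem) For every D₁ ≥ 1 and every ε ∈ (0,1) there exist a natural number N = N(D₁,ε) and a constant L = L(D₁,ε) ≥ 1 such that for every metric space (X,d) that is doubling with constant D₁, there exists a map f : X → ℝ^N (Euclidean space with the Euclidean norm) satisfying (1/L) · d(x,y)^ε ≤ ‖f(x) − f(y)‖ ≤ L · d(x,y)^ε for all x, y ∈ X; that is, the ε-snowflaked version (X, d^ε) of X admits a bilipschitz embedding into ℝ^N, quantitatively. -/

import Mathlib

/-!
At each dyadic scale `r = 2⁻ⁿ`, a maximal `r`-separated net of a `D`-doubling space has at most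
`D⁶` points within `16 r` of any of its points, so a greedy colouring splits it into `D⁶` classes,
each `16 r`-separated. Cutoffs around the colour classes give `D⁶` functions with oscillation at
most `min 1 (d / r)`, one of which jumps from `1` to `0` between any two points at distance
`d ∈ [4 r, 8 r)`.

The embedding sums these cutoffs over all scales with weights `2^(-n ε)`, one coordinate per
colour and per residue of `n` modulo a large `m`. The weights `2^(-n ε) min 1 (2ⁿ d)` decay
geometrically on both sides of the scale of `d`, which gives the upper bound `≲ d^ε`; in the
coordinate containing the separating cutoff at the scale of `d`, the other scales are at least
`m` steps away, so they cannot cancel its contribution `2^(-n ε) ≥ d^ε / 8`.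
-/

open Metric

/-- `(X,d)` is a doubling metric space with constant `D₁`. -/
def MetricDoubling (X : Type*) [MetricSpace X] (D₁ : ℕ) : Prop :=
  ∀ (x : X) (r : ℝ), 0 < r →
    ∃ s : Finset X, s.card ≤ D₁ ∧
      closedBall x r ⊆ ⋃ y ∈ s, closedBall y (r / 2)

open Set
open scoped NNReal ENNReal

lemma Metric.exists_isSeparated_isCover {X : Type*} [PseudoEMetricSpace X] (ε : ℝ≥0) :
    ∃ A : Set X, IsSeparated ε A ∧ IsCover ε univ A := by
  obtain ⟨A, hA⟩ := zorn_subset {A : Set X | IsSeparated ε A} fun c hc hchain =>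
    ⟨⋃₀ c, hchain.pairwise_sUnion.2 hc, fun _ => subset_sUnion_of_mem⟩
  exact ⟨A, hA.prop, .of_maximal_isSeparated (by simpa using hA)⟩

namespace SimpleGraph
variable {V : Type*} (G : SimpleGraph V)

open Classical in
noncomputable def greedyColor : V → ℕ :=
  IsWellFounded.fix WellOrderingRel fun v c =>
    sInf {k | ∀ w (hw : WellOrderingRel w v), G.Adj v w → c w hw ≠ k}

lemma greedyColor_eq (v : V) : G.greedyColor v =
    sInf {k | ∀ w, WellOrderingRel w v → G.Adj v w → G.greedyColor w ≠ k} := by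
  rw [greedyColor, IsWellFounded.fix_eq]

variable {G} {K : ℕ}

lemma exists_lt_forall_adj_greedyColor_ne (hK : ∀ v, (G.neighborSet v).encard < K) (v : V) :
    ∃ k < K, ∀ w, G.Adj v w → G.greedyColor w ≠ k := by
  by_contra! h
  have : Iio K ⊆ G.greedyColor '' G.neighborSet v := fun k hk => h k hk
  have := (Set.encard_le_encard this).trans (Set.encard_image_le _ _) |>.trans_lt (hK v)
  rw [← Finset.coe_range, Set.encard_coe_eq_coe_finsetCard, Finset.card_range] at this
  exact lt_irrefl _ this

lemma greedyColor_lt (hK : ∀ v, (G.neighborSet v).encard < K) (v : V) : G.greedyColor v < K := by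
  obtain ⟨k, hkK, hk⟩ := exists_lt_forall_adj_greedyColor_ne hK v
  rw [greedyColor_eq]
  refine (Nat.sInf_le ?_).trans_lt hkK
  exact fun w _ hvw => hk w hvw

lemma greedyColor_ne (hK : ∀ v, (G.neighborSet v).encard < K) {v w : V} (hvw : G.Adj v w)
    (hwv : WellOrderingRel w v) : G.greedyColor v ≠ G.greedyColor w := by
  obtain ⟨k, -, hk⟩ := exists_lt_forall_adj_greedyColor_ne hK v
  have hmem := Nat.sInf_mem (s := {k | ∀ w, WellOrderingRel w v → G.Adj v w → G.greedyColor w ≠ k})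
    ⟨k, fun w _ hvw => hk w hvw⟩
  rw [← greedyColor_eq] at hmem
  exact (hmem w hwv hvw).symm

theorem colorable_of_encard_neighborSet_lt (hK : ∀ v, (G.neighborSet v).encard < K) :
    G.Colorable K := by
  refine ⟨.mk (fun v => ⟨G.greedyColor v, greedyColor_lt hK v⟩) fun {v w} hvw => ?_⟩
  simp only [ne_eq, Fin.mk.injEq]
  rcases trichotomous_of WellOrderingRel v w with h | rfl | h
  · exact (greedyColor_ne hK hvw.symm h).symm
  · exact (G.irrefl hvw).elim
  · exact greedyColor_ne hK hvw h

end SimpleGraph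

section doubling
variable {X : Type*} [MetricSpace X] {D : ℕ}

lemma MetricDoubling.exists_finset_cover (hD : MetricDoubling X D) (x : X) {R : ℝ} (hR : 0 < R)
    (k : ℕ) :
    ∃ s : Finset X, s.card ≤ D ^ k ∧ closedBall x R ⊆ ⋃ y ∈ s, closedBall y (R / 2 ^ k) := by
  classical
  induction k with
  | zero => exact ⟨{x}, by simp⟩
  | succ k ih =>
    obtain ⟨s, hs, hcov⟩ := ih
    choose t ht htcov using fun y : X => hD y (R / 2 ^ k) (by positivity)
    refine ⟨s.biUnion t, ?_, fun z hz => ?_⟩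
    · calc (s.biUnion t).card ≤ s.card * D := Finset.card_biUnion_le_card_mul _ _ _ fun y _ => ht y
        _ ≤ D ^ k * D := Nat.mul_le_mul_right D hs
        _ = D ^ (k + 1) := (pow_succ D k).symm
    · obtain ⟨y, hy, hzy⟩ := mem_iUnion₂.1 (hcov hz)
      obtain ⟨w, hw, hzw⟩ := mem_iUnion₂.1 (htcov y hzy)
      rw [pow_succ, ← div_div]
      exact mem_iUnion₂.2 ⟨w, Finset.mem_biUnion.2 ⟨y, hy, hw⟩, hzw⟩

lemma MetricDoubling.encard_le_pow_of_isSeparated (hD : MetricDoubling X D) {x : X} {R : ℝ≥0}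
    (hR : 0 < R) (k : ℕ) {S : Set X} (hS : S ⊆ closedBall x R)
    (hsep : IsSeparated (2 * (R / 2 ^ k) : ℝ≥0) S) : S.encard ≤ D ^ k := by
  obtain ⟨s, hs, hcov⟩ := hD.exists_finset_cover x (R := R) hR k
  calc S.encard ≤ packingNumber (2 * (R / 2 ^ k)) (closedBall x R) :=
        hsep.encard_le_packingNumber hS
    _ ≤ externalCoveringNumber (R / 2 ^ k) (closedBall x R) :=
        packingNumber_two_mul_le_externalCoveringNumber _ _
    _ ≤ (s : Set X).encard :=
        IsCover.externalCoveringNumber_le_encard <|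
          .of_subset_iUnion_closedBall (by push_cast; exact hcov)
    _ ≤ D ^ k := by rw [Set.encard_coe_eq_coe_finsetCard]; exact_mod_cast hs

end doubling

section cutoff
variable {X : Type*} [PseudoMetricSpace X]

noncomputable def cutoff (S : Set X) (r : ℝ) (x : X) : ℝ :=
  max (min (2 - infDist x S / r) 1) 0

variable {S : Set X} {r : ℝ}

lemma cutoff_nonneg (x : X) : 0 ≤ cutoff S r x := le_max_right _ _

lemma cutoff_le_one (x : X) : cutoff S r x ≤ 1 := max_le (min_le_right _ _) zero_le_one

lemma abs_cutoff_sub_le (hr : 0 < r) (x y : X) :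
    |cutoff S r x - cutoff S r y| ≤ min 1 (dist x y / r) := by
  refine le_min ?_ ?_
  · rw [abs_sub_le_iff]
    constructor <;> linarith [cutoff_nonneg (S := S) (r := r) x, cutoff_nonneg (S := S) (r := r) y,
      cutoff_le_one (S := S) (r := r) x, cutoff_le_one (S := S) (r := r) y]
  calc |cutoff S r x - cutoff S r y|
      ≤ |min (2 - infDist x S / r) 1 - min (2 - infDist y S / r) 1| := abs_max_sub_max_le_abs _ _ _
    _ ≤ |(2 - infDist x S / r) - (2 - infDist y S / r)| :=
        (abs_min_sub_min_le_max _ _ _ _).trans_eq (by simp)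
    _ = |infDist y S - infDist x S| / r := by
        rw [← abs_of_pos hr, ← abs_div, abs_of_pos hr]; ring_nf
    _ ≤ dist x y / r := by
        gcongr
        simpa [Real.dist_eq, dist_comm y x] using (lipschitz_infDist_pt S).dist_le_mul y x

lemma cutoff_eq_one (hr : 0 < r) {x a : X} (ha : a ∈ S) (hxa : dist x a ≤ r) :
    cutoff S r x = 1 := by
  have : infDist x S / r ≤ 1 := (div_le_one hr).2 ((infDist_le_dist_of_mem ha).trans hxa)
  rw [cutoff, min_eq_right (by linarith), max_eq_left zero_le_one]

lemma cutoff_eq_zero (hr : 0 < r) {y : X} (hS : S.Nonempty) (hy : ∀ a ∈ S, 2 * r ≤ dist y a) :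
    cutoff S r y = 0 := by
  have : 2 ≤ infDist y S / r := (le_div_iff₀ hr).2 ((le_infDist hS).2 hy)
  rw [cutoff, max_eq_right (min_le_of_left_le (by linarith))]

end cutoff

def proximityGraph {X : Type*} [PseudoMetricSpace X] (A : Set X) (R : ℝ) : SimpleGraph X where
  Adj a b := a ≠ b ∧ a ∈ A ∧ b ∈ A ∧ dist a b ≤ R
  symm := ⟨fun a b h => ⟨h.1.symm, h.2.2.1, h.2.1, dist_comm a b ▸ h.2.2.2⟩⟩
  loopless := ⟨fun _ h => h.1 rfl⟩

section separation
variable {X : Type*} [MetricSpace X] {D : ℕ}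

lemma MetricDoubling.encard_neighborSet_proximityGraph_lt (hD : MetricDoubling X D) (hD1 : 1 ≤ D)
    {r : ℝ≥0} (hr : 0 < r) {A : Set X} (hA : IsSeparated r A) (a : X) :
    ((proximityGraph A (16 * r)).neighborSet a).encard < D ^ 6 := by
  by_cases ha : a ∈ A
  · have hsep : IsSeparated ((2 * (16 * r / 2 ^ 6) : ℝ≥0) : ℝ≥0∞) (A ∩ closedBall a (16 * r)) := by
      refine (hA.subset inter_subset_left).anti (ENNReal.coe_le_coe.2 ?_)
      rw [← NNReal.coe_le_coe]; push_cast; linarith [r.2]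
    have hS := hD.encard_le_pow_of_isSeparated (R := 16 * r) (by positivity) 6
      (by push_cast; exact inter_subset_right) hsep
    have hsub : (proximityGraph A (16 * r)).neighborSet a ⊆ A ∩ closedBall a (16 * r) :=
      fun b hb => ⟨hb.2.2.1, by rw [mem_closedBall, dist_comm]; exact hb.2.2.2⟩
    replace hsub := (ssubset_iff_of_subset hsub).2
      ⟨a, ⟨ha, mem_closedBall_self (by positivity)⟩, fun h => h.1 rfl⟩
    exact ((Set.finite_of_encard_le_coe hS).subset hsub.subset |>.encard_lt_encard hsub).trans_le hS
  · have : (proximityGraph A (16 * r)).neighborSet a = ∅ :=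
      eq_empty_of_forall_notMem fun b hb => ha hb.2.1
    rw [this, encard_empty]; exact_mod_cast pow_pos hD1 6

theorem MetricDoubling.exists_separating_cutoffs (hD : MetricDoubling X D) (hD1 : 1 ≤ D)
    {r : ℝ≥0} (hr : 0 < r) :
    ∃ G : Fin (D ^ 6) → X → ℝ, (∀ i x y, |G i x - G i y| ≤ min 1 (dist x y / r)) ∧
      ∀ x y, 4 * r ≤ dist x y → dist x y < 8 * r → ∃ i, G i x - G i y = 1 := by
  obtain ⟨A, hAsep, hAcov⟩ := exists_isSeparated_isCover (X := X) r
  obtain ⟨c⟩ := SimpleGraph.colorable_of_encard_neighborSet_lt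
    (hD.encard_neighborSet_proximityGraph_lt hD1 hr hAsep)
  have hr' : (0:ℝ) < r := hr
  refine ⟨fun i => cutoff {a ∈ A | c a = i} r, fun i => abs_cutoff_sub_le hr', fun x y h4 h8 => ?_⟩
  obtain ⟨a, ha, hxa⟩ : ∃ a ∈ A, dist x a ≤ r := by
    simpa using isCover_iff_subset_iUnion_closedBall.1 hAcov (mem_univ x)
  have haS : a ∈ {a' ∈ A | c a' = c a} := ⟨ha, rfl⟩
  refine ⟨c a, ?_⟩
  dsimp only
  rw [cutoff_eq_one hr' haS hxa, cutoff_eq_zero hr' ⟨a, haS⟩ fun a' ha' => ?_, sub_zero]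
  by_cases h : a' = a
  · rw [h]; linarith [dist_triangle x a y, dist_comm a y]
  have hfar : 16 * (r : ℝ) < dist a' a := by
    by_contra! hle
    exact c.valid ⟨h, ha'.1, ha, hle⟩ ha'.2
  linarith [dist_triangle4 a' y x a, dist_comm a' y, dist_comm y x]

end separation

lemma hasSum_pow_natAbs_sub {σ : ℝ} (h0 : 0 ≤ σ) (h1 : σ < 1) (k₀ : ℤ) :
    HasSum (fun k : ℤ => σ ^ (k - k₀).natAbs) ((1 + σ) / (1 - σ)) := by
  have hpos : HasSum (fun n : ℕ => σ ^ ((n : ℤ)).natAbs) (1 - σ)⁻¹ := by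
    simpa only [Int.natAbs_natCast] using hasSum_geometric_of_lt_one h0 h1
  have hneg : HasSum (fun n : ℕ => σ ^ (-((n : ℤ) + 1)).natAbs) (σ * (1 - σ)⁻¹) := by
    have h : (fun n : ℕ => σ ^ (-((n : ℤ) + 1)).natAbs) = fun n => σ * σ ^ n := by
      ext n; rw [← pow_succ', Int.natAbs_neg, show ((n : ℤ) + 1).natAbs = n + 1 by omega]
    rw [h]; exact (hasSum_geometric_of_lt_one h0 h1).mul_left σ
  rw [show (1 + σ) / (1 - σ) = (1 - σ)⁻¹ + σ * (1 - σ)⁻¹ by ring]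
  exact (Equiv.subRight k₀).hasSum_iff (f := fun k : ℤ => σ ^ k.natAbs) |>.mpr
    (HasSum.of_nat_of_neg_add_one hpos hneg)

lemma hasSum_ite_pow_natAbs_sub {σ : ℝ} (h0 : 0 ≤ σ) (h1 : σ < 1) (k₀ : ℤ) :
    HasSum (fun k : ℤ => if k = k₀ then 0 else σ ^ (k - k₀).natAbs) (2 * σ / (1 - σ)) := by
  have h := (hasSum_pow_natAbs_sub h0 h1 k₀).update k₀ 0
  rw [sub_self, Int.natAbs_zero, pow_zero] at h
  have hf : Function.update (fun k : ℤ => σ ^ (k - k₀).natAbs) k₀ 0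
      = fun k => if k = k₀ then 0 else σ ^ (k - k₀).natAbs := by
    ext k; exact Function.update_apply _ _ _ _
  rwa [hf, show (0:ℝ) - 1 + (1 + σ) / (1 - σ) = 2 * σ / (1 - σ) by
    field_simp [show 1 - σ ≠ 0 by linarith]; ring] at h

lemma abs_tsum_le_tsum_of_abs_le {ι : Type*} {f g : ι → ℝ} (hg : Summable g)
    (hfg : ∀ i, |f i| ≤ g i) : |∑' i, f i| ≤ ∑' i, g i := by
  have hf : Summable fun i => |f i| := .of_nonneg_of_le (fun _ => abs_nonneg _) hfg hg
  calc |∑' i, f i| ≤ ∑' i, |f i| := by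
        simpa only [Real.norm_eq_abs] using
          norm_tsum_le_tsum_norm (f := f) (by simpa only [Real.norm_eq_abs] using hf)
    _ ≤ ∑' i, g i := hf.tsum_le_tsum hfg hg

lemma EuclideanSpace.norm_le_sqrt_card_mul {ι : Type*} [Fintype ι] (v : EuclideanSpace ℝ ι)
    {B : ℝ} (hB₀ : 0 ≤ B) (hB : ∀ i, |v i| ≤ B) : ‖v‖ ≤ √(Fintype.card ι) * B := by
  rw [EuclideanSpace.norm_eq, ← Real.sqrt_sq hB₀, ← Real.sqrt_mul (Nat.cast_nonneg _)]
  gcongr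
  calc ∑ i, ‖v i‖ ^ 2 ≤ ∑ _i : ι, B ^ 2 := by
        gcongr with i; rw [Real.norm_eq_abs]; exact hB i
    _ = _ := by simp

lemma exists_two_rpow_neg_le_lt {d : ℝ} (hd : 0 < d) :
    ∃ n : ℤ, (2:ℝ) ^ (-n : ℝ) ≤ d ∧ d < 2 * 2 ^ (-n : ℝ) := by
  obtain ⟨p, hp₁, hp₂⟩ := exists_mem_Ico_zpow hd one_lt_two
  refine ⟨-p, ?_, ?_⟩ <;> rw [Int.cast_neg, neg_neg, Real.rpow_intCast]
  · exact hp₁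
  · rwa [zpow_add_one₀ two_ne_zero, mul_comm] at hp₂

/-- The weights `scaleWeight ε d n` decay by a factor `2^(-ε)` per step towards small scales and
`2^(-(1 - ε))` towards large ones, measured from the scale of `d`. -/
noncomputable def decayRatio (ε : ℝ) : ℝ := 2 ^ (-min ε (1 - ε))

noncomputable def scaleWeight (ε d : ℝ) (n : ℤ) : ℝ :=
  2 ^ (-n * ε : ℝ) * min 1 (d / 2 ^ (-n : ℝ))

section scaleWeight
variable {ε : ℝ}

lemma decayRatio_pos : 0 < decayRatio ε := by unfold decayRatio; positivity

lemma decayRatio_lt_one (hε0 : 0 < ε) (hε1 : ε < 1) : decayRatio ε < 1 :=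
  Real.rpow_lt_one_of_one_lt_of_neg one_lt_two (neg_neg_of_pos (lt_min hε0 (by linarith)))

lemma scaleWeight_nonneg {d : ℝ} (hd : 0 ≤ d) (n : ℤ) : 0 ≤ scaleWeight ε d n := by
  unfold scaleWeight; positivity

lemma scaleWeight_zero_left : scaleWeight ε 0 = 0 := funext fun n => by simp [scaleWeight]

lemma scaleWeight_le (hε0 : 0 < ε) (hε1 : ε < 1) {d : ℝ} {n₀ : ℤ}
    (h₁ : (2:ℝ) ^ (-n₀ : ℝ) ≤ d) (h₈ : d ≤ 8 * 2 ^ (-n₀ : ℝ)) (n : ℤ) :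
    scaleWeight ε d n ≤ 8 * d ^ ε * decayRatio ε ^ (n - n₀).natAbs := by
  set δ := min ε (1 - ε)
  have hδε : δ ≤ ε := min_le_left _ _
  have hδε' : δ ≤ 1 - ε := min_le_right _ _
  have hmono : ∀ {a b : ℝ}, a ≤ b → (2:ℝ) ^ a ≤ 2 ^ b :=
    Real.rpow_le_rpow_of_exponent_le one_le_two
  have hρ : decayRatio ε ^ (n - n₀).natAbs = 2 ^ (-δ * |(n:ℝ) - n₀|) := by
    rw [decayRatio, ← Real.rpow_natCast, ← Real.rpow_mul two_pos.le, Nat.cast_natAbs]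
    push_cast; rfl
  have hd : (2:ℝ) ^ (-n₀ * ε : ℝ) ≤ d ^ ε := by
    rw [Real.rpow_mul two_pos.le]; exact Real.rpow_le_rpow (by positivity) h₁ hε0.le
  have key : scaleWeight ε d n ≤ 8 * 2 ^ (-n₀ * ε + -δ * |(n:ℝ) - n₀|) := by
    unfold scaleWeight
    rcases le_total n₀ n with h | h
    · have h' : (n₀:ℝ) ≤ n := by exact_mod_cast h
      calc _ ≤ (2:ℝ) ^ (-n * ε : ℝ) := mul_le_of_le_one_right (by positivity) (min_le_left _ _)
        _ ≤ 2 ^ (-n₀ * ε + -δ * |(n:ℝ) - n₀|) := by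
            apply hmono; rw [abs_of_nonneg (by linarith)]; nlinarith
        _ ≤ _ := le_mul_of_one_le_left (by positivity) (by norm_num)
    · have h' : (n:ℝ) ≤ n₀ := by exact_mod_cast h
      calc _ ≤ (2:ℝ) ^ (-n * ε : ℝ) * (8 * 2 ^ (-n₀ : ℝ) / 2 ^ (-n : ℝ)) := by
            gcongr; exact (min_le_right _ _).trans (by gcongr)
        _ = 8 * 2 ^ (-n * ε + -n₀ - -n : ℝ) := by
            rw [Real.rpow_sub two_pos, Real.rpow_add two_pos]; ring
        _ ≤ _ := by
            gcongr 8 * ?_; apply hmono; rw [abs_of_nonpos (by linarith)]; nlinarith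
  calc scaleWeight ε d n ≤ 8 * (2 ^ (-n₀ * ε : ℝ) * 2 ^ (-δ * |(n:ℝ) - n₀|)) := by
        rwa [← Real.rpow_add two_pos]
    _ ≤ 8 * (d ^ ε * 2 ^ (-δ * |(n:ℝ) - n₀|)) := by gcongr
    _ = _ := by rw [hρ]; ring

lemma exists_scaleWeight_le_geometric (hε0 : 0 < ε) (hε1 : ε < 1) {d : ℝ} (hd : 0 < d) :
    ∃ n₀ : ℤ, ∀ n, scaleWeight ε d n ≤ 8 * d ^ ε * decayRatio ε ^ (n - n₀).natAbs :=
  let ⟨n₀, h₁, h₂⟩ := exists_two_rpow_neg_le_lt hd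
  ⟨n₀, scaleWeight_le hε0 hε1 h₁ (by linarith [(by positivity : (0:ℝ) < 2 ^ (-n₀ : ℝ))])⟩

lemma summable_scaleWeight (hε0 : 0 < ε) (hε1 : ε < 1) {d : ℝ} (hd : 0 ≤ d) :
    Summable (scaleWeight ε d) := by
  rcases hd.eq_or_lt with rfl | hd
  · rw [scaleWeight_zero_left]; exact summable_zero
  obtain ⟨n₀, hle⟩ := exists_scaleWeight_le_geometric hε0 hε1 hd
  exact .of_nonneg_of_le (scaleWeight_nonneg hd.le) hle
    ((hasSum_pow_natAbs_sub decayRatio_pos.le (decayRatio_lt_one hε0 hε1) n₀).summable.mul_left _)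

lemma tsum_scaleWeight_le (hε0 : 0 < ε) (hε1 : ε < 1) {d : ℝ} (hd : 0 ≤ d) :
    ∑' n, scaleWeight ε d n ≤ 8 * ((1 + decayRatio ε) / (1 - decayRatio ε)) * d ^ ε := by
  rcases hd.eq_or_lt with rfl | hd
  · simp [scaleWeight_zero_left, Real.zero_rpow hε0.ne']
  obtain ⟨n₀, hle⟩ := exists_scaleWeight_le_geometric hε0 hε1 hd
  have hsum := (hasSum_pow_natAbs_sub decayRatio_pos.le (decayRatio_lt_one hε0 hε1) n₀).mul_left
    (8 * d ^ ε)
  calc ∑' n, scaleWeight ε d n ≤ 8 * d ^ ε * ((1 + decayRatio ε) / (1 - decayRatio ε)) :=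
        (summable_scaleWeight hε0 hε1 hd.le).tsum_le_tsum hle hsum.summable |>.trans_eq hsum.tsum_eq
    _ = _ := by ring

end scaleWeight

section snowflake
variable {X : Type*} {ε : ℝ}

noncomputable def snowTerm (ε : ℝ) (g : ℤ → X → ℝ) (x y : X) (n : ℤ) : ℝ :=
  2 ^ (-n * ε : ℝ) * (g n x - g n y)

lemma snowTerm_sub_snowTerm (g : ℤ → X → ℝ) (x y z : X) (n : ℤ) :
    snowTerm ε g x z n - snowTerm ε g y z n = snowTerm ε g x y n := by
  unfold snowTerm; ring

lemma injective_mul_add {m : ℕ} [NeZero m] (j : ℤ) : Function.Injective fun k : ℤ => k * m + j := by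
  intro a b h; simpa [NeZero.ne m] using h

variable [PseudoMetricSpace X]

def ScaleLipschitz (g : ℤ → X → ℝ) : Prop :=
  ∀ n x y, |g n x - g n y| ≤ min 1 (dist x y / 2 ^ (-n : ℝ))

variable {g : ℤ → X → ℝ}

lemma ScaleLipschitz.abs_snowTerm_le (hg : ScaleLipschitz g) (x y : X) (n : ℤ) :
    |snowTerm ε g x y n| ≤ scaleWeight ε (dist x y) n := by
  rw [snowTerm, abs_mul, abs_of_pos (by positivity)]
  exact mul_le_mul_of_nonneg_left (hg n x y) (by positivity)

lemma ScaleLipschitz.summable_snowTerm_comp (hg : ScaleLipschitz g) (hε0 : 0 < ε) (hε1 : ε < 1)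
    {e : ℤ → ℤ} (he : Function.Injective e) (x y : X) :
    Summable fun k => snowTerm ε g x y (e k) :=
  .of_norm_bounded ((summable_scaleWeight hε0 hε1 dist_nonneg).comp_injective he)
    fun k => (Real.norm_eq_abs _).trans_le (hg.abs_snowTerm_le x y (e k))

lemma ScaleLipschitz.tsum_snowTerm_comp_sub (hg : ScaleLipschitz g) (hε0 : 0 < ε) (hε1 : ε < 1)
    {e : ℤ → ℤ} (he : Function.Injective e) (x y z : X) :
    ∑' k, snowTerm ε g x z (e k) - ∑' k, snowTerm ε g y z (e k) = ∑' k, snowTerm ε g x y (e k) := by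
  rw [← (hg.summable_snowTerm_comp hε0 hε1 he x z).tsum_sub
    (hg.summable_snowTerm_comp hε0 hε1 he y z)]
  simp only [snowTerm_sub_snowTerm]

lemma ScaleLipschitz.abs_tsum_snowTerm_comp_le (hg : ScaleLipschitz g) (hε0 : 0 < ε)
    (hε1 : ε < 1) {e : ℤ → ℤ} (he : Function.Injective e) (x y : X) :
    |∑' k, snowTerm ε g x y (e k)|
      ≤ 8 * ((1 + decayRatio ε) / (1 - decayRatio ε)) * dist x y ^ ε := by
  have hsw := summable_scaleWeight hε0 hε1 (dist_nonneg (x := x) (y := y))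
  calc |∑' k, snowTerm ε g x y (e k)| ≤ ∑' k, scaleWeight ε (dist x y) (e k) :=
        abs_tsum_le_tsum_of_abs_le (hsw.comp_injective he) fun k => hg.abs_snowTerm_le x y (e k)
    _ ≤ ∑' n, scaleWeight ε (dist x y) n :=
        tsum_comp_le_tsum_of_inj hsw (scaleWeight_nonneg dist_nonneg) he
    _ ≤ _ := tsum_scaleWeight_le hε0 hε1 dist_nonneg

lemma ScaleLipschitz.le_abs_tsum_snowTerm (hg : ScaleLipschitz g) (hε0 : 0 < ε) (hε1 : ε < 1)
    {m : ℕ} [NeZero m] (hρm : decayRatio ε ^ m ≤ 1 / 257) {x y : X} {k₀ j : ℤ}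
    (h₁ : (2:ℝ) ^ (-(k₀ * m + j : ℤ) : ℝ) ≤ dist x y)
    (h₈ : dist x y < 8 * 2 ^ (-(k₀ * m + j : ℤ) : ℝ))
    (hgxy : g (k₀ * m + j) x - g (k₀ * m + j) y = 1) :
    dist x y ^ ε / 16 ≤ |∑' k, snowTerm ε g x y (k * m + j)| := by
  classical
  set n := k₀ * m + j
  set d := dist x y
  have hd : 0 < d := by linarith [(by positivity : (0:ℝ) < 2 ^ (-n : ℝ))]
  have hσ₀ : 0 ≤ decayRatio ε ^ m := pow_nonneg decayRatio_pos.le m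
  have hsum := (hasSum_ite_pow_natAbs_sub hσ₀ (by linarith) k₀).mul_left (8 * d ^ ε)
  have hrest : |∑' k, if k = k₀ then 0 else snowTerm ε g x y (k * m + j)| ≤ d ^ ε / 16 := by
    refine (abs_tsum_le_tsum_of_abs_le hsum.summable fun k => ?_).trans ?_
    · split_ifs with hk
      · simp
      calc |snowTerm ε g x y (k * m + j)| ≤ scaleWeight ε d (k * m + j) :=
            hg.abs_snowTerm_le x y _
        _ ≤ 8 * d ^ ε * decayRatio ε ^ (k * m + j - n).natAbs := scaleWeight_le hε0 hε1 h₁ h₈.le _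
        _ = 8 * d ^ ε * (decayRatio ε ^ m) ^ (k - k₀).natAbs := by
            rw [← pow_mul, show k * m + j - n = (k - k₀) * m by ring, Int.natAbs_mul,
              Int.natAbs_natCast, mul_comm m]
    · have : 8 * (2 * decayRatio ε ^ m / (1 - decayRatio ε ^ m)) ≤ 1 / 16 := by
        rw [← mul_div_assoc, div_le_iff₀ (by linarith)]
        linarith
      rw [hsum.tsum_eq]
      nlinarith [Real.rpow_nonneg hd.le ε]
  have hmain : d ^ ε / 8 ≤ 2 ^ (-n * ε : ℝ) := by
    calc d ^ ε / 8 ≤ d ^ ε / 8 ^ ε := by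
          gcongr; exact Real.rpow_le_self_of_one_le (by norm_num) hε1.le
      _ = (d / 8) ^ ε := (Real.div_rpow hd.le (by norm_num) ε).symm
      _ ≤ ((2:ℝ) ^ (-n : ℝ)) ^ ε := by gcongr; linarith
      _ = 2 ^ (-n * ε : ℝ) := by rw [← Real.rpow_mul two_pos.le]
  have hk₀ : snowTerm ε g x y (k₀ * m + j) = 2 ^ (-n * ε : ℝ) := by
    rw [snowTerm, hgxy, mul_one]
  rw [(hg.summable_snowTerm_comp hε0 hε1 (injective_mul_add j) x y).tsum_eq_add_tsum_ite k₀, hk₀]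
  linarith [abs_sub_abs_le_abs_add (2 ^ (-n * ε : ℝ))
    (∑' k, if k = k₀ then 0 else snowTerm ε g x y (k * m + j)),
    abs_of_pos (by positivity : (0:ℝ) < 2 ^ (-n * ε : ℝ))]

variable {ι : Type*}

/-- The coordinate `(i, j)` sums the cutoffs `G i n` over the scales `n ≡ j [ZMOD m]`; the values
at the base point `x₀` are subtracted to make the series converge at large scales. -/
noncomputable def assouadMap (ε : ℝ) (m : ℕ) (G : ι → ℤ → X → ℝ) (x₀ x : X) :
    EuclideanSpace ℝ (ι × Fin m) :=
  WithLp.toLp 2 fun ij => ∑' k, snowTerm ε (G ij.1) x x₀ (k * m + ij.2)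

variable {m : ℕ} [NeZero m] {G : ι → ℤ → X → ℝ}

lemma assouadMap_sub_apply (hG : ∀ i, ScaleLipschitz (G i)) (hε0 : 0 < ε) (hε1 : ε < 1)
    (x₀ x y : X) (ij : ι × Fin m) :
    (assouadMap ε m G x₀ x - assouadMap ε m G x₀ y) ij
      = ∑' k, snowTerm ε (G ij.1) x y (k * m + ij.2) :=
  (hG ij.1).tsum_snowTerm_comp_sub hε0 hε1 (injective_mul_add _) x y x₀

theorem exists_snowflake_embedding_of_separating [Fintype ι] (hε0 : 0 < ε) (hε1 : ε < 1)
    (hρm : decayRatio ε ^ m ≤ 1 / 257) (hG : ∀ i, ScaleLipschitz (G i))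
    (hsep : ∀ (n : ℤ) (x y : X), 4 * 2 ^ (-n : ℝ) ≤ dist x y → dist x y < 8 * 2 ^ (-n : ℝ) →
      ∃ i, G i n x - G i n y = 1) :
    ∃ f : X → EuclideanSpace ℝ (ι × Fin m), ∀ x y,
      dist x y ^ ε / 16 ≤ ‖f x - f y‖ ∧
      ‖f x - f y‖ ≤ √(Fintype.card (ι × Fin m)) *
        (8 * ((1 + decayRatio ε) / (1 - decayRatio ε))) * dist x y ^ ε := by
  rcases isEmpty_or_nonempty X with hX | ⟨⟨x₀⟩⟩
  · exact ⟨fun _ => 0, fun x => hX.elim x⟩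
  refine ⟨assouadMap ε m G x₀, fun x y => ⟨?_, ?_⟩⟩
  · rcases (dist_nonneg (x := x) (y := y)).eq_or_lt with hxy | hxy
    · rw [← hxy, Real.zero_rpow hε0.ne', zero_div]; exact norm_nonneg _
    obtain ⟨n, h₁, h₂⟩ := exists_two_rpow_neg_le_lt (d := dist x y / 4) (by positivity)
    have hr : (0:ℝ) < 2 ^ (-n : ℝ) := by positivity
    obtain ⟨i, hi⟩ := hsep n x y (by linarith) (by linarith)
    set p := Int.divModEquiv m n
    have hn : p.1 * m + (p.2 : ℤ) = n := by
      rw [← Int.divModEquiv_symm_apply]; exact Equiv.symm_apply_apply _ n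
    rw [← hn] at h₁ h₂ hi hr
    calc dist x y ^ ε / 16 ≤ |∑' k, snowTerm ε (G i) x y (k * m + p.2)| :=
          (hG i).le_abs_tsum_snowTerm hε0 hε1 hρm (by linarith) (by linarith) hi
      _ = ‖(assouadMap ε m G x₀ x - assouadMap ε m G x₀ y) (i, p.2)‖ := by
          rw [assouadMap_sub_apply hG hε0 hε1, Real.norm_eq_abs]
      _ ≤ _ := PiLp.norm_apply_le _ _
  · have := decayRatio_lt_one hε0 hε1
    have := (decayRatio_pos (ε := ε)).le
    rw [mul_assoc]
    refine EuclideanSpace.norm_le_sqrt_card_mul _ (by positivity) fun ij => ?_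
    rw [assouadMap_sub_apply hG hε0 hε1]
    exact (hG ij.1).abs_tsum_snowTerm_comp_le hε0 hε1 (injective_mul_add _) x y

end snowflake

/-- Assouad's embedding theorem: the `ε`-snowflaked version of a doubling metric space
embeds bilipschitzly into some Euclidean space, quantitatively. -/
theorem stmt19 (D₁ : ℕ) (hD₁ : 1 ≤ D₁) (ε : ℝ) (hε0 : 0 < ε) (hε1 : ε < 1) :
    ∃ (N : ℕ) (L : ℝ), 1 ≤ L ∧
      ∀ (X : Type) [MetricSpace X], MetricDoubling X D₁ →
        ∃ f : X → EuclideanSpace ℝ (Fin N),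
          ∀ x y : X,
            (1 / L) * dist x y ^ ε ≤ ‖f x - f y‖ ∧
              ‖f x - f y‖ ≤ L * dist x y ^ ε := by
  obtain ⟨m, hm⟩ := exists_pow_lt_of_lt_one (by norm_num : (0:ℝ) < 1 / 257)
    (decayRatio_lt_one hε0 hε1)
  have : NeZero m := ⟨by rintro rfl; norm_num at hm⟩
  set C := 8 * ((1 + decayRatio ε) / (1 - decayRatio ε))
  refine ⟨D₁ ^ 6 * m, max 16 (√(D₁ ^ 6 * m : ℕ) * C), le_max_of_le_left (by norm_num),
    fun X _ hD => ?_⟩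
  choose G hGlip hGsep using fun n : ℤ =>
    hD.exists_separating_cutoffs hD₁ (r := (2:ℝ≥0) ^ (-n : ℝ)) (by positivity)
  obtain ⟨f, hf⟩ := exists_snowflake_embedding_of_separating (G := fun i n => G n i) hε0 hε1 hm.le
    (fun i n x y => by simpa only [NNReal.coe_rpow, NNReal.coe_ofNat] using hGlip n i x y)
    (fun n x y => by simpa only [NNReal.coe_rpow, NNReal.coe_ofNat] using hGsep n x y)
  refine ⟨fun x => LinearIsometryEquiv.piLpCongrLeft 2 ℝ ℝ finProdFinEquiv (f x), fun x y => ?_⟩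
  rw [← map_sub, LinearIsometryEquiv.norm_map]
  obtain ⟨hlow, hup⟩ := hf x y
  rw [Fintype.card_prod, Fintype.card_fin, Fintype.card_fin] at hup
  have := Real.rpow_nonneg (dist_nonneg (x := x) (y := y)) ε
  constructor
  · calc 1 / max 16 (√(D₁ ^ 6 * m : ℕ) * C) * dist x y ^ ε ≤ 1 / 16 * dist x y ^ ε := by
          gcongr; exact le_max_left _ _
      _ ≤ _ := by linarith
  · exact hup.trans (by gcongr; exact le_max_right _ _)
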